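/- arXiv:1911.03816 — 5 statements merged into one kernel-verified Lean document; each statement's English description precedes it below -/
import Mathlib

section
/- Let 0 < α ≤ √2 − 1 and let X be an ℕ-valued random variable satisfying the recursive distributional equation. Then for all s ∈ [0,1], G(s) = Q₊(s) = (1/2)((2−p)s + p + √(((2−p)s + p)² − 4s·exp(α(s−1)))). -/
open scoped ENNReal

/-- The Poisson(α) probability mass function on ℕ. -/
noncomputable def poissonPMF (α : ℝ) (k : ℕ) : ℝ≥0∞ :=
  ENNReal.ofReal (Real.exp (-α) * α ^ k / (Nat.factorial k))

/-- The Geometric(1/2) pmf: P(N = k) = (1/2)^(k+1) for k ≥ 0. -/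
noncomputable def geomHalf (k : ℕ) : ℝ≥0∞ := (1 / 2) ^ (k + 1)

/-- The law of (X - 1)⁺ when X has law μ on ℕ. -/
noncomputable def shiftLaw (μ : ℕ → ℝ≥0∞) (k : ℕ) : ℝ≥0∞ :=
  if k = 0 then μ 0 + μ 1 else μ (k + 1)

/-- Convolution of two (sub-)pmfs on ℕ: the law of an independent sum. -/
noncomputable def convAdd (f g : ℕ → ℝ≥0∞) (k : ℕ) : ℝ≥0∞ :=
  ∑ j ∈ Finset.range (k + 1), f j * g (k - j)

/-- n-fold convolution of a pmf on ℕ: the law of a sum of n i.i.d. copies. -/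
noncomputable def iterConv (f : ℕ → ℝ≥0∞) : ℕ → ℕ → ℝ≥0∞
  | 0 => fun k => if k = 0 then 1 else 0
  | n + 1 => convAdd (iterConv f n) f

/-- μ is the law of an ℕ-valued random variable X satisfying the RDE
    X =_d P + ∑_{i=1}^N (X_i - 1)⁺, with P ~ Poisson(α), N ~ Geom(1/2),
    X_i i.i.d. with law μ, all independent. -/
def SatisfiesRDE (α : ℝ) (μ : ℕ → ℝ≥0∞) : Prop :=
  (∑' k, μ k) = 1 ∧
  ∀ k, μ k = ∑' n, geomHalf n * convAdd (poissonPMF α) (iterConv (shiftLaw μ) n) k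

/-- The probability generating function G(s) = E[s^X]. -/
noncomputable def pgf (μ : ℕ → ℝ≥0∞) (s : ℝ) : ℝ := ∑' k, (μ k).toReal * s ^ k

/-- The mean E[X] = ∑ k · P(X = k), valued in [0,∞]. -/
noncomputable def meanENN (μ : ℕ → ℝ≥0∞) : ℝ≥0∞ := ∑' k : ℕ, (k : ℝ≥0∞) * μ k

/-!
On `[0,1]` the equation turns into an identity of generating functions. Conditioning on `N`
gives `2 G = P + G H` with `P(s) = exp (α (s - 1))` and `H` the generating function of
`(X - 1)⁺`, while `s H = G - p + p s`; eliminating `H`, `G` is a root of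
`G² - ((2 - p) s + p) G + s P = 0`, i.e. `(2 G - ((2 - p) s + p))² = D(s)` with `D` the
discriminant in the statement. Since `D ≥ 0` on `[0,1]` and `D(1) = 0`, the slope of `D` at `1`
forces `p ≥ 1 - α`; for `α² + 2 α ≤ 1` this in turn makes `D > 0` on `[0,1)`. So the continuous
function `2 G - ((2 - p) s + p)` never vanishes on `[0,1)` and keeps the sign it has at `0`,
where it equals `p > 0`: it is the positive square root of `D`.
-/

open Finset

lemma ENNReal.tsum_mul_tsum_eq_tsum_sum_range (f g : ℕ → ℝ≥0∞) :
    (∑' n, f n) * ∑' n, g n = ∑' n, ∑ k ∈ range (n + 1), f k * g (n - k) := by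
  calc (∑' n, f n) * ∑' n, g n = ∑' kl : ℕ × ℕ, f kl.1 * g kl.2 := by
        rw [ENNReal.tsum_prod', ← ENNReal.tsum_mul_right]
        exact tsum_congr fun k => ENNReal.tsum_mul_left.symm
    _ = ∑' x : Σ n, antidiagonal n, f x.2.1.1 * g x.2.1.2 :=
        (HasAntidiagonal.sigmaAntidiagonalEquivProd.tsum_eq _).symm
    _ = ∑' n, ∑ kl ∈ antidiagonal n, f kl.1 * g kl.2 := by
        rw [ENNReal.tsum_sigma']
        exact tsum_congr fun n => Finset.tsum_subtype (antidiagonal n) fun kl => f kl.1 * g kl.2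
    _ = _ := by simp_rw [Nat.sum_antidiagonal_eq_sum_range_succ_mk]

noncomputable def genFun (f : ℕ → ℝ≥0∞) (t : ℝ≥0∞) : ℝ≥0∞ := ∑' k, f k * t ^ k

section genFun

variable (f g : ℕ → ℝ≥0∞) (t : ℝ≥0∞)

lemma genFun_convAdd : genFun (convAdd f g) t = genFun f t * genFun g t := by
  rw [genFun, genFun, genFun, ENNReal.tsum_mul_tsum_eq_tsum_sum_range]
  refine tsum_congr fun n => ?_
  rw [convAdd, sum_mul]
  refine sum_congr rfl fun k hk => ?_
  rw [← pow_mul_pow_sub t (mem_range_succ_iff.mp hk)]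
  ring

lemma genFun_iterConv (n : ℕ) : genFun (iterConv f n) t = genFun f t ^ n := by
  induction n with
  | zero => simp [genFun, iterConv]
  | succ n ih => rw [iterConv, genFun_convAdd, ih, pow_succ]

lemma genFun_shiftLaw : t * genFun (shiftLaw f) t + f 0 = genFun f t + t * f 0 := by
  have hshift : t * genFun (shiftLaw f) t = t * (f 0 + f 1) + ∑' k, f (k + 2) * t ^ (k + 2) := by
    rw [genFun, ← ENNReal.tsum_mul_left, tsum_eq_zero_add' ENNReal.summable]
    simp only [shiftLaw, if_pos, Nat.add_one_ne_zero, if_false]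
    ring_nf
  have hf : genFun f t = f 0 + f 1 * t + ∑' k, f (k + 2) * t ^ (k + 2) := by
    rw [genFun, tsum_eq_zero_add' ENNReal.summable, tsum_eq_zero_add' ENNReal.summable]
    simp only [pow_zero, mul_one, zero_add, pow_one, add_assoc]
  rw [hshift, hf]
  ring

end genFun

lemma two_mul_tsum_geomHalf_mul (x y : ℝ≥0∞) :
    2 * ∑' n, geomHalf n * (y * x ^ n) = y + (∑' n, geomHalf n * (y * x ^ n)) * x := by
  set S := ∑' n, geomHalf n * (y * x ^ n) with hSdef
  have hshift : ∑' n, geomHalf (n + 1) * (y * x ^ (n + 1)) = 2⁻¹ * (S * x) := by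
    rw [← ENNReal.tsum_mul_right, ← ENNReal.tsum_mul_left]
    exact tsum_congr fun n => by simp only [geomHalf, one_div, pow_succ]; ring
  have hS : S = 2⁻¹ * (y + S * x) := by
    conv_lhs => rw [hSdef, tsum_eq_zero_add' ENNReal.summable]
    rw [mul_add, hshift]
    simp [geomHalf]
  calc 2 * S = 2 * 2⁻¹ * (y + S * x) := by rw [mul_assoc, ← hS]
    _ = y + S * x := by rw [ENNReal.mul_inv_cancel two_ne_zero ENNReal.ofNat_ne_top, one_mul]

lemma SatisfiesRDE.two_mul_genFun {α : ℝ} {μ : ℕ → ℝ≥0∞} (hμ : SatisfiesRDE α μ) (t : ℝ≥0∞) :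
    2 * genFun μ t = genFun (poissonPMF α) t + genFun μ t * genFun (shiftLaw μ) t := by
  have hG : genFun μ t
      = ∑' n, geomHalf n * (genFun (poissonPMF α) t * genFun (shiftLaw μ) t ^ n) := by
    calc genFun μ t
        = ∑' k, ∑' n, geomHalf n * (convAdd (poissonPMF α) (iterConv (shiftLaw μ) n) k * t ^ k) :=
          tsum_congr fun k => by
            rw [hμ.2 k, ← ENNReal.tsum_mul_right]
            simp only [mul_assoc]
      _ = ∑' n, geomHalf n * genFun (convAdd (poissonPMF α) (iterConv (shiftLaw μ) n)) t := by
          rw [ENNReal.tsum_comm]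
          simp only [genFun, ENNReal.tsum_mul_left]
      _ = _ := by simp only [genFun_convAdd, genFun_iterConv]
  rw [hG, two_mul_tsum_geomHalf_mul]

lemma genFun_poissonPMF {α : ℝ} (hα : 0 ≤ α) {s : ℝ} (hs : 0 ≤ s) :
    genFun (poissonPMF α) (ENNReal.ofReal s) = ENNReal.ofReal (Real.exp (α * (s - 1))) := by
  have hterm (k : ℕ) : poissonPMF α k * ENNReal.ofReal s ^ k
      = ENNReal.ofReal (Real.exp (-α) * ((α * s) ^ k / k.factorial)) := by
    rw [poissonPMF, ← ENNReal.ofReal_pow hs, ← ENNReal.ofReal_mul (by positivity), mul_pow]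
    ring_nf
  have hexp : ∑' k : ℕ, (α * s) ^ k / k.factorial = Real.exp (α * s) := by
    rw [Real.exp_eq_exp_ℝ, NormedSpace.exp_eq_tsum_div]
  rw [genFun, tsum_congr hterm, ← ENNReal.ofReal_tsum_of_nonneg (fun k => by positivity)
    ((Real.summable_pow_div_factorial _).mul_left _), tsum_mul_left, hexp, ← Real.exp_add]
  ring_nf

lemma genFun_le_tsum (f : ℕ → ℝ≥0∞) {t : ℝ≥0∞} (ht : t ≤ 1) : genFun f t ≤ ∑' k, f k :=
  ENNReal.tsum_le_tsum fun _ => mul_le_of_le_one_right' (pow_le_one₀ zero_le ht)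

lemma toReal_genFun_ofReal {f : ℕ → ℝ≥0∞} (hf : ∑' k, f k ≠ ⊤) {s : ℝ} (hs : 0 ≤ s) :
    (genFun f (ENNReal.ofReal s)).toReal = pgf f s := by
  rw [genFun, ENNReal.tsum_toReal_eq fun k => by finiteness [ENNReal.ne_top_of_tsum_ne_top hf k]]
  simp only [ENNReal.toReal_mul, ENNReal.toReal_pow, ENNReal.toReal_ofReal hs, pgf]

section SatisfiesRDE

variable {α : ℝ} {μ : ℕ → ℝ≥0∞}

lemma SatisfiesRDE.pgf_quadratic (hμ : SatisfiesRDE α μ) (hα : 0 ≤ α) {s : ℝ} (hs0 : 0 ≤ s)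
    (hs1 : s ≤ 1) :
    pgf μ s ^ 2 - ((2 - (μ 0).toReal) * s + (μ 0).toReal) * pgf μ s
      + s * Real.exp (α * (s - 1)) = 0 := by
  set t := ENNReal.ofReal s
  set G := genFun μ t with hGdef
  have hsum : ∑' k, μ k ≠ ⊤ := by simp [hμ.1]
  have hG : G ≠ ⊤ := ne_top_of_le_ne_top hsum (genFun_le_tsum μ (ENNReal.ofReal_le_one.mpr hs1))
  have h0 : μ 0 ≠ ⊤ := ENNReal.ne_top_of_tsum_ne_top hsum 0
  set E := Real.exp (α * (s - 1))
  -- `genFun (shiftLaw μ) t` may be infinite, so it is eliminated before passing to `ℝ`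
  have key : 2 * (t * G) + μ 0 * G = t * ENNReal.ofReal E + G * G + t * μ 0 * G :=
    calc 2 * (t * G) + μ 0 * G
        = t * ENNReal.ofReal E + (t * genFun (shiftLaw μ) t + μ 0) * G := by
          rw [← mul_assoc, mul_comm 2 t, mul_assoc, hμ.two_mul_genFun, genFun_poissonPMF hα hs0]
          ring
      _ = t * ENNReal.ofReal E + G * G + t * μ 0 * G := by
          rw [genFun_shiftLaw]
          ring
  have keyR := congrArg ENNReal.toReal key
  simp (disch := finiteness) only [ENNReal.toReal_add, ENNReal.toReal_mul,
    ENNReal.toReal_ofNat] at keyR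
  rw [hGdef, toReal_genFun_ofReal hsum hs0, ENNReal.toReal_ofReal (Real.exp_pos _).le,
    ENNReal.toReal_ofReal hs0] at keyR
  linear_combination -keyR

lemma SatisfiesRDE.pgf_one (hμ : SatisfiesRDE α μ) : pgf μ 1 = 1 := by
  simp only [pgf, one_pow, mul_one]
  rw [← ENNReal.tsum_toReal_eq (ENNReal.ne_top_of_tsum_ne_top (by simp [hμ.1])), hμ.1,
    ENNReal.toReal_one]

lemma pgf_zero (μ : ℕ → ℝ≥0∞) : pgf μ 0 = (μ 0).toReal := by
  rw [pgf, tsum_eq_single 0 fun k hk => by simp [zero_pow hk]]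
  simp

lemma continuousOn_pgf (hμ : ∑' k, μ k ≠ ⊤) : ContinuousOn (pgf μ) (Set.Icc 0 1) := by
  rw [continuousOn_iff_continuous_domRestrict]
  refine continuous_tsum (fun k => continuous_const.mul (continuous_subtype_val.pow k))
    (ENNReal.summable_toReal hμ) fun k s => ?_
  have hs0 : (0 : ℝ) ≤ s := s.2.1
  rw [norm_mul, Real.norm_of_nonneg ENNReal.toReal_nonneg, norm_pow, Real.norm_of_nonneg hs0]
  exact mul_le_of_le_one_right ENNReal.toReal_nonneg (pow_le_one₀ hs0 s.2.2)

lemma SatisfiesRDE.toReal_apply_zero_pos (hμ : SatisfiesRDE α μ) : 0 < (μ 0).toReal := by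
  have hle : geomHalf 0 * (poissonPMF α 0 * 1) ≤ μ 0 := by
    rw [hμ.2 0]
    refine le_trans (le_of_eq ?_) (ENNReal.le_tsum 0)
    simp [convAdd, iterConv]
  refine ENNReal.toReal_pos (ne_of_gt (lt_of_lt_of_le ?_ hle))
    (ENNReal.ne_top_of_tsum_ne_top (by simp [hμ.1]) 0)
  simp [geomHalf, poissonPMF, Real.exp_pos]

end SatisfiesRDE

lemma exp_neg_le_one_sub_add_sq_div_two {x : ℝ} (hx : 0 ≤ x) :
    Real.exp (-x) ≤ 1 - x + x ^ 2 / 2 := by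
  rw [Real.exp_neg, inv_le_iff_one_le_mul₀ (Real.exp_pos x)]
  -- `(1 - x + x²/2) (1 + x + x²/2) = 1 + x⁴/4`
  nlinarith [Real.quadratic_le_exp_of_nonneg hx, sq_nonneg (x - 1), pow_nonneg hx 4]

noncomputable def pgfDiscrim (α p s : ℝ) : ℝ :=
  ((2 - p) * s + p) ^ 2 - 4 * s * Real.exp (α * (s - 1))

section pgfDiscrim

variable {α p : ℝ}

lemma one_sub_le_of_pgfDiscrim_nonneg (hα : 0 ≤ α) (hp0 : 0 ≤ p)
    (h : ∀ s ∈ Set.Icc (0 : ℝ) 1, 0 ≤ pgfDiscrim α p s) : 1 - α ≤ p := by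
  by_contra! hlt
  obtain ⟨u, hu0, huc, hu1⟩ : ∃ u : ℝ, 0 < u ∧ u < 1 - α - p ∧ u ≤ 1 / 2 :=
    ⟨min (1 - α - p) 1 / 2, by positivity, by linarith [min_le_left (1 - α - p) 1],
      by linarith [min_le_right (1 - α - p) 1]⟩
  have hexp : 1 - α * u ≤ Real.exp (α * (1 - u - 1)) := by
    linarith [Real.add_one_le_exp (α * (1 - u - 1))]
  have hD := h (1 - u) ⟨by linarith, by linarith⟩
  rw [pgfDiscrim] at hD
  nlinarith [mul_le_mul_of_nonneg_left hexp (by linarith : (0 : ℝ) ≤ 4 * (1 - u)),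
    mul_nonneg (mul_nonneg hp0 (by linarith : (0 : ℝ) ≤ 4 - p)) (sq_nonneg u),
    mul_nonneg hα (sq_nonneg u), mul_pos hu0 (sub_pos.2 huc)]

lemma pgfDiscrim_pos (hα : 0 ≤ α) (hα2 : α ^ 2 + 2 * α ≤ 1) (hpα : 1 - α ≤ p)
    {s : ℝ} (hs0 : 0 < s) (hs1 : s < 1) : 0 < pgfDiscrim α p s := by
  set u := 1 - s
  have hexp : Real.exp (α * (s - 1)) ≤ 1 - α * u + (α * u) ^ 2 / 2 := by
    rw [show α * (s - 1) = -(α * u) by ring]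
    exact exp_neg_le_one_sub_add_sq_div_two (by positivity)
  have hb : 0 < 2 - (1 + α) * u := by nlinarith
  have hb' : 2 - (1 + α) * u ≤ (2 - p) * s + p := by nlinarith
  -- `(2 - (1 + α) u)² - 4 (1 - u) (1 - α u + (α u)²/2) = (1 - 2 α - α²) u² + 2 α² u³`
  rw [pgfDiscrim]
  nlinarith [pow_le_pow_left₀ hb.le hb' 2,
    mul_le_mul_of_nonneg_left hexp (by linarith : (0 : ℝ) ≤ 4 * s),
    mul_nonneg (by linarith : (0 : ℝ) ≤ 1 - 2 * α - α ^ 2) (sq_nonneg u),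
    mul_nonneg (sq_nonneg α) (pow_nonneg (by linarith : (0 : ℝ) ≤ u) 3),
    pow_pos (by linarith : (0 : ℝ) < u) 2]

end pgfDiscrim

lemma IsPreconnected.eqOn_sqrt_of_sq_eq {X : Type*} [TopologicalSpace X] {S : Set X}
    {f D : X → ℝ} (hS : IsPreconnected S) (hf : ContinuousOn f S) (hD : ContinuousOn D S)
    (hsq : ∀ x ∈ S, f x ^ 2 = D x) (hpos : ∀ x ∈ S, 0 < D x) {y : X} (hy : y ∈ S)
    (hfy : 0 < f y) : Set.EqOn f (fun x => Real.sqrt (D x)) S := by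
  refine hS.eq_of_sq_eq hf hD.sqrt (fun x hx => ?_) (fun hx => (Real.sqrt_pos.2 (hpos _ hx)).ne')
    hy ?_
  · simp [hsq x hx, Real.sq_sqrt (hpos x hx).le]
  · rw [← Real.sqrt_sq hfy.le, hsq y hy]

/-- For 0 < α ≤ √2 − 1, G(s) = Q₊(s) for all s ∈ [0,1]. -/
theorem pgf_eq_Qplus_small_alpha
    (α : ℝ) (hα0 : 0 < α) (hα1 : α ≤ Real.sqrt 2 - 1)
    (μ : ℕ → ℝ≥0∞) (hμ : SatisfiesRDE α μ)
    (p : ℝ) (hp : p = (μ 0).toReal) :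
    ∀ s ∈ Set.Icc (0 : ℝ) 1,
      pgf μ s = (1 / 2) * ((2 - p) * s + p +
        Real.sqrt (((2 - p) * s + p) ^ 2 - 4 * s * Real.exp (α * (s - 1)))) := by
  have hp0 : 0 < p := hp ▸ hμ.toReal_apply_zero_pos
  have hα2 : α ^ 2 + 2 * α ≤ 1 := by
    nlinarith [Real.sq_sqrt (zero_le_two : (0 : ℝ) ≤ 2)]
  have hsq : ∀ s ∈ Set.Icc (0 : ℝ) 1,
      (2 * pgf μ s - ((2 - p) * s + p)) ^ 2 = pgfDiscrim α p s := fun s hs => by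
    rw [pgfDiscrim, hp]
    linear_combination 4 * hμ.pgf_quadratic hα0.le hs.1 hs.2
  have hpα : 1 - α ≤ p :=
    one_sub_le_of_pgfDiscrim_nonneg hα0.le hp0.le fun s hs => hsq s hs ▸ sq_nonneg _
  have hpos : ∀ s ∈ Set.Ico (0 : ℝ) 1, 0 < pgfDiscrim α p s := by
    rintro s ⟨hs0, hs1⟩
    rcases hs0.eq_or_lt with rfl | hs0
    · simpa [pgfDiscrim] using pow_pos hp0 2
    · exact pgfDiscrim_pos hα0.le hα2 hpα hs0 hs1
  have hroot : Set.EqOn (fun s => 2 * pgf μ s - ((2 - p) * s + p))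
      (fun s => Real.sqrt (pgfDiscrim α p s)) (Set.Ico 0 1) := by
    refine isPreconnected_Ico.eqOn_sqrt_of_sq_eq ?_ (by unfold pgfDiscrim; fun_prop)
      (fun s hs => hsq s (Set.Ico_subset_Icc_self hs)) hpos (Set.left_mem_Ico.2 one_pos) ?_
    · exact (continuousOn_const.mul ((continuousOn_pgf (μ := μ) (by simp [hμ.1])).mono
        Set.Ico_subset_Icc_self)).sub (by fun_prop)
    · simpa [pgf_zero, ← hp, two_mul] using hp0
  rintro s ⟨hs0, hs1⟩
  rcases hs1.lt_or_eq with hs1 | rfl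
  · have h := hroot ⟨hs0, hs1⟩
    dsimp only at h
    rw [← pgfDiscrim, ← h]
    ring
  · norm_num [hμ.pgf_one]
end

section
/- Let 0 < α ≤ √2 − 1 and define g(s) := ((1+α)s + (1−α))² − 4s·exp(α(s−1)) for real s. Then g(s) > 0 for all s ∈ (0,1), and g(1) = 0. -/
/-!
Writing `t = 1 - s` and `y = α t`, the bound `exp (-y) < 1 / (1 + y + y² / 2)` for `y > 0` reduces
`g s > 0` to the polynomial inequality `4 (1 - t) ≤ (2 - (1 + α) t)² (1 + y + y² / 2)`. The
difference of its two sides is `t² (1 - 2α - α²) + t³ α (1 - α²) + t⁴ α² (1 + α)² / 2`, and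
`α ≤ √2 - 1` is what makes the `t²` coefficient `1 - 2α - α²` nonnegative.
-/

open Real

lemma sq_add_two_mul_le_one_of_le_sqrt_two_sub_one {α : ℝ} (h₀ : -1 ≤ α) (h : α ≤ √2 - 1) :
    α ^ 2 + 2 * α ≤ 1 := by
  have h₁ : (α + 1) ^ 2 ≤ √2 ^ 2 := pow_le_pow_left₀ (by linarith) (by linarith) 2
  rw [sq_sqrt zero_le_two] at h₁
  linarith

lemma quadratic_lt_exp_of_pos {x : ℝ} (hx : 0 < x) : 1 + x + x ^ 2 / 2 < exp x := by
  have h := sum_le_exp_of_nonneg hx.le 4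
  simp only [Finset.sum_range_succ, Finset.sum_range_zero, Nat.factorial] at h
  norm_num at h
  linarith [pow_pos hx 3]

lemma four_mul_le_sq_mul_quadratic {α s : ℝ} (hα : 0 ≤ α) (hα' : α ^ 2 + 2 * α ≤ 1)
    (hs : s ≤ 1) :
    4 * s ≤ ((1 + α) * s + (1 - α)) ^ 2 * (1 + α * (1 - s) + (α * (1 - s)) ^ 2 / 2) := by
  have ht : 0 ≤ 1 - s := by linarith
  have hα1 : α ≤ 1 := by nlinarith
  have h₂ : 0 ≤ (1 - s) ^ 2 * (1 - 2 * α - α ^ 2) := mul_nonneg (sq_nonneg _) (by linarith)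
  have h₃ : 0 ≤ (1 - s) ^ 3 * (α * (1 + α) * (1 - α)) := by
    apply mul_nonneg (pow_nonneg ht 3)
    exact mul_nonneg (mul_nonneg hα (by linarith)) (by linarith)
  have h₄ : 0 ≤ (1 - s) ^ 4 * (α ^ 2 / 2 * (1 + α) ^ 2) := by positivity
  have hdiff : ((1 + α) * s + (1 - α)) ^ 2 * (1 + α * (1 - s) + (α * (1 - s)) ^ 2 / 2) - 4 * s
      = (1 - s) ^ 2 * (1 - 2 * α - α ^ 2) + (1 - s) ^ 3 * (α * (1 + α) * (1 - α))
        + (1 - s) ^ 4 * (α ^ 2 / 2 * (1 + α) ^ 2) := by ring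
  linarith

lemma four_mul_mul_exp_lt_sq {α s : ℝ} (hα : 0 < α) (hα' : α ^ 2 + 2 * α ≤ 1)
    (hs₀ : 0 < s) (hs₁ : s < 1) :
    4 * s * exp (α * (s - 1)) < ((1 + α) * s + (1 - α)) ^ 2 := by
  set y := α * (1 - s) with hy
  have hy₀ : 0 < y := mul_pos hα (by linarith)
  have hQ : 0 < 1 + y + y ^ 2 / 2 := by positivity
  have hinv : exp (α * (s - 1)) * exp y = 1 := by
    rw [← exp_add, hy]
    ring_nf
    exact exp_zero
  refine lt_of_mul_lt_mul_right ?_ hQ.le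
  calc 4 * s * exp (α * (s - 1)) * (1 + y + y ^ 2 / 2)
      < 4 * s * exp (α * (s - 1)) * exp y := by
        gcongr
        exact quadratic_lt_exp_of_pos hy₀
    _ = 4 * s := by rw [mul_assoc, hinv, mul_one]
    _ ≤ ((1 + α) * s + (1 - α)) ^ 2 * (1 + y + y ^ 2 / 2) :=
        four_mul_le_sq_mul_quadratic hα.le hα' hs₁.le

/-- For 0 < α ≤ √2 − 1 and g(s) = ((1+α)s + (1−α))² − 4s·exp(α(s−1)),
we have g(s) > 0 on (0,1) and g(1) = 0. -/
theorem g_pos_on_unit_interval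
    (α : ℝ) (hα0 : 0 < α) (hα1 : α ≤ Real.sqrt 2 - 1)
    (g : ℝ → ℝ)
    (hg : ∀ s : ℝ, g s = ((1 + α) * s + (1 - α)) ^ 2 - 4 * s * Real.exp (α * (s - 1))) :
    (∀ s ∈ Set.Ioo (0 : ℝ) 1, 0 < g s) ∧ g 1 = 0 := by
  have hα := sq_add_two_mul_le_one_of_le_sqrt_two_sub_one (by linarith) hα1
  refine ⟨fun s ⟨hs₀, hs₁⟩ => ?_, ?_⟩
  · rw [hg, sub_pos]
    exact four_mul_mul_exp_lt_sq hα0 hα hs₀ hs₁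
  · rw [hg]
    norm_num
end

section
/- Let √2 − 1 < α < 1 and define g(s) := ((1+α)s + (1−α))² − 4s·exp(α(s−1)) for real s. Then there exists δ > 0 such that g(s) < 0 for all s ∈ (1−δ, 1). Moreover g(1) = 0, g'(1) = 0, and g''(1) = −2(α + 1 + √2)(α + 1 − √2) < 0. -/
/-!
Since `g 1 = g' 1 = 0` and `g'' 1 < 0` exactly when `(α + 1)² > 2`, the strict form of the
second-derivative test gives `g' > 0` just to the left of `1`, so `g` increases strictly to
`g 1 = 0` there.
-/

open Filter Set Topology Real

theorem eventually_nhdsLT_lt_of_deriv_deriv_neg {f : ℝ → ℝ} {x₀ : ℝ}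
    (hf : deriv (deriv f) x₀ < 0) (hd : deriv f x₀ = 0) (hc : ContinuousAt f x₀) :
    ∀ᶠ x in 𝓝[<] x₀, f x < f x₀ := by
  have hpos : ∀ᶠ x in 𝓝[<] x₀, 0 < deriv f x := deriv_pos_left_of_sign_deriv <|
    nhdsWithin_le_nhds <| eventually_nhdsWithin_sign_eq_of_deriv_neg hf hd
  obtain ⟨b, hb, hIoo⟩ := (nhdsLT_basis x₀).eventually_iff.mp hpos
  have hcont : ContinuousOn f (Ioc b x₀) := fun y hy => by
    rcases hy.2.eq_or_lt with rfl | hlt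
    · exact hc.continuousWithinAt
    · exact (differentiableAt_of_deriv_ne_zero (hIoo ⟨hy.1, hlt⟩).ne').continuousAt
        |>.continuousWithinAt
  have hmono : StrictMonoOn f (Ioc b x₀) :=
    strictMonoOn_of_deriv_pos (convex_Ioc b x₀) hcont fun y hy =>
      hIoo (by rwa [interior_Ioc] at hy)
  filter_upwards [Ioo_mem_nhdsLT hb] with x hx
  exact hmono ⟨hx.1, hx.2.le⟩ (right_mem_Ioc.mpr hb) hx.2

theorem hasDerivAt_exp_mul_sub_one (α s : ℝ) :
    HasDerivAt (fun s => exp (α * (s - 1))) (α * exp (α * (s - 1))) s := by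
  simpa [mul_comm] using (((hasDerivAt_id s).sub_const 1).const_mul α).exp

theorem hasDerivAt_sq_sub_mul_exp (α s : ℝ) :
    HasDerivAt (fun s => ((1 + α) * s + (1 - α)) ^ 2 - 4 * s * exp (α * (s - 1)))
      (2 * (1 + α) * ((1 + α) * s + (1 - α)) - 4 * (1 + α * s) * exp (α * (s - 1))) s := by
  have hlin : HasDerivAt (fun s => (1 + α) * s + (1 - α)) (1 + α) s := by
    simpa using ((hasDerivAt_id s).const_mul (1 + α)).add_const (1 - α)
  have hprod := ((hasDerivAt_id' s).const_mul 4).fun_mul (hasDerivAt_exp_mul_sub_one α s)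
  refine ((hlin.fun_pow 2).sub hprod).congr_deriv ?_
  push_cast
  ring

theorem hasDerivAt_deriv_sq_sub_mul_exp (α s : ℝ) :
    HasDerivAt
      (fun s => 2 * (1 + α) * ((1 + α) * s + (1 - α)) - 4 * (1 + α * s) * exp (α * (s - 1)))
      (2 * (1 + α) ^ 2 - 4 * α * (2 + α * s) * exp (α * (s - 1))) s := by
  have hlin : HasDerivAt (fun s => (1 + α) * s + (1 - α)) (1 + α) s := by
    simpa using ((hasDerivAt_id s).const_mul (1 + α)).add_const (1 - α)
  have hfac : HasDerivAt (fun s => 4 * (1 + α * s)) (4 * α) s := by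
    simpa using (((hasDerivAt_id s).const_mul α).const_add 1).const_mul 4
  refine ((hlin.const_mul (2 * (1 + α))).sub
    (hfac.fun_mul (hasDerivAt_exp_mul_sub_one α s))).congr_deriv ?_
  ring

theorem g_neg_near_one_large_alpha_general
    (α : ℝ) (hα0 : Real.sqrt 2 - 1 < α)
    (g : ℝ → ℝ)
    (hg : ∀ s : ℝ, g s = ((1 + α) * s + (1 - α)) ^ 2 - 4 * s * Real.exp (α * (s - 1))) :
    (∃ δ > (0 : ℝ), ∀ s ∈ Set.Ioo (1 - δ) 1, g s < 0) ∧
    g 1 = 0 ∧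
    deriv g 1 = 0 ∧
    deriv (deriv g) 1 = -2 * (α + 1 + Real.sqrt 2) * (α + 1 - Real.sqrt 2) ∧
    deriv (deriv g) 1 < 0 := by
  have hasDeriv : ∀ s, HasDerivAt g
      (2 * (1 + α) * ((1 + α) * s + (1 - α)) - 4 * (1 + α * s) * exp (α * (s - 1))) s := by
    rw [funext hg]; exact hasDerivAt_sq_sub_mul_exp α
  have hd : deriv g = _ := funext fun s => (hasDeriv s).deriv
  have hdd : deriv (deriv g) = _ :=
    hd ▸ funext fun s => (hasDerivAt_deriv_sq_sub_mul_exp α s).deriv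
  have hg1 : g 1 = 0 := by rw [hg]; simp only [sub_self, mul_zero, exp_zero]; ring
  have hd1 : deriv g 1 = 0 := by rw [hd]; simp only [sub_self, mul_zero, exp_zero]; ring
  have hdd1 : deriv (deriv g) 1 = -2 * (α + 1 + √2) * (α + 1 - √2) := by
    rw [hdd]; simp only [sub_self, mul_zero, exp_zero]
    linear_combination (-2) * sq_sqrt (zero_le_two : (0 : ℝ) ≤ 2)
  have hdd1_neg : deriv (deriv g) 1 < 0 := by
    have hsum : 0 < α + 1 + √2 := by linarith [sqrt_nonneg 2]
    have hdiff : 0 < α + 1 - √2 := by linarith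
    rw [hdd1]; nlinarith [mul_pos hsum hdiff]
  refine ⟨?_, hg1, hd1, hdd1, hdd1_neg⟩
  have hc : ContinuousAt g 1 := (hasDeriv 1).continuousAt
  obtain ⟨b, hb, hlt⟩ := (nhdsLT_basis 1).eventually_iff.mp
    (eventually_nhdsLT_lt_of_deriv_deriv_neg hdd1_neg hd1 hc)
  refine ⟨1 - b, by linarith, fun s hs => ?_⟩
  rw [sub_sub_cancel] at hs
  exact hg1 ▸ hlt hs

/-- For √2 − 1 < α < 1 and g(s) = ((1+α)s + (1−α))² − 4s·exp(α(s−1)),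
there exists δ > 0 with g < 0 on (1−δ, 1); moreover g(1) = 0, g'(1) = 0 and
g''(1) = −2(α + 1 + √2)(α + 1 − √2) < 0. -/
theorem g_neg_near_one_large_alpha
    (α : ℝ) (hα0 : Real.sqrt 2 - 1 < α) (hα1 : α < 1)
    (g : ℝ → ℝ)
    (hg : ∀ s : ℝ, g s = ((1 + α) * s + (1 - α)) ^ 2 - 4 * s * Real.exp (α * (s - 1))) :
    (∃ δ > (0 : ℝ), ∀ s ∈ Set.Ioo (1 - δ) 1, g s < 0) ∧
    g 1 = 0 ∧
    deriv g 1 = 0 ∧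
    deriv (deriv g) 1 = -2 * (α + 1 + Real.sqrt 2) * (α + 1 - Real.sqrt 2) ∧
    deriv (deriv g) 1 < 0 :=
  g_neg_near_one_large_alpha_general α hα0 g hg
end

section
/- Let α > 0 and let p ∈ (0,2) satisfy (3+α)p < 6. Then (αp + p − 2)² − 4αp(2−p) = (6 − (3+α)p)² − 8(2−p)², and this quantity is nonnegative if and only if p ≤ 2/(1 + (3 + 2√2)α). -/
/-- For α > 0 and p ∈ (0,2) with (3+α)p < 6,
(αp + p − 2)² − 4αp(2−p) = (6 − (3+α)p)² − 8(2−p)², and this is nonnegative iff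
p ≤ 2/(1 + (3 + 2√2)α). -/
theorem discriminant_identity_and_sign
    (α p : ℝ) (hα : 0 < α) (hp0 : 0 < p) (hp2 : p < 2) (h6 : (3 + α) * p < 6) :
    (α * p + p - 2) ^ 2 - 4 * α * p * (2 - p)
      = (6 - (3 + α) * p) ^ 2 - 8 * (2 - p) ^ 2 ∧
    (0 ≤ (α * p + p - 2) ^ 2 - 4 * α * p * (2 - p)
      ↔ p ≤ 2 / (1 + (3 + 2 * Real.sqrt 2) * α)) := by
  set s := Real.sqrt 2 with hs_def
  have hs2 : s ^ 2 = 2 := Real.sq_sqrt (by norm_num)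
  have hs1 : 1 < s := by
    have : (1 : ℝ) = Real.sqrt 1 := by simp
    rw [this, hs_def]
    exact Real.sqrt_lt_sqrt (by norm_num) (by norm_num)
  have hslt : s < 3 / 2 := by nlinarith
  have hD : 0 < 1 + (3 + 2 * s) * α := by nlinarith
  -- key quantities
  have hA : 0 < 6 - (3 + α) * p := by linarith
  have hB : 0 < 2 - p := by linarith
  have hAB : 0 < 6 - (3 + α) * p + 2 * s * (2 - p) := by nlinarith
  constructor
  · ring
  · rw [le_div_iff₀ hD]
    constructor
    · intro h
      have hfac : 0 ≤ (6 - (3 + α) * p - 2 * s * (2 - p)) *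
          (6 - (3 + α) * p + 2 * s * (2 - p)) := by nlinarith
      have h1 : 0 ≤ 6 - (3 + α) * p - 2 * s * (2 - p) :=
        nonneg_of_mul_nonneg_right (by nlinarith : (0:ℝ) ≤ (6 - (3 + α) * p + 2 * s * (2 - p)) * (6 - (3 + α) * p - 2 * s * (2 - p))) hAB
      nlinarith
    · intro h
      have h2 : 0 ≤ (3 + 2 * s) * (6 - (3 + α) * p - 2 * s * (2 - p)) := by nlinarith
      have h3 : 0 < 3 + 2 * s := by nlinarith
      have h1 : 0 ≤ 6 - (3 + α) * p - 2 * s * (2 - p) :=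
        nonneg_of_mul_nonneg_left (by nlinarith : (0:ℝ) ≤ (6 - (3 + α) * p - 2 * s * (2 - p)) * (3 + 2 * s)) h3
      nlinarith
end

section
/- Let W₁, W₂, ... be i.i.d. integer-valued random variables with P(W₁ ≤ 1) = 1, E[W₁] = m ≥ 0 and q := P(W₁ = 1) > 0, and let Sₙ := W₁ + ... + Wₙ. Then P(Sₙ ≥ 0 for all n ∈ ℕ) = m/q. -/
/-!
Since the steps are at most `1`, the running maximum `max_{k ≤ N} S_k` goes up by one exactly at
the times `n < N` at which `S_n` is a weak record and `W_{n+1} = 1`, so it counts those times.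
Reversing the first `n` steps preserves the law of an i.i.d. sequence and turns "`S_n` is a weak
record" into "`S_k ≥ 0` for all `k ≤ n`"; this event does not involve `W_{n+1}`, so the expected
running maximum is `q ∑_{n<N} P(S_k ≥ 0, k ≤ n)`. By the strong law and `m ≥ 0`, the running maximum
divided by `N` tends to `m` almost surely, and it lies in `[0, 1]`; dominated convergence and Cesàro
averaging give `m = q P(S_n ≥ 0 for all n)`.
-/

open MeasureTheory ProbabilityTheory Finset Filter Topology

def IsWeakRecord (w : ℕ → ℤ) (n : ℕ) : Prop :=
  ∀ k ≤ n, ∑ i ∈ range k, w i ≤ ∑ i ∈ range n, w i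

instance (w : ℕ → ℤ) : DecidablePred (IsWeakRecord w) := fun _ => by
  unfold IsWeakRecord; infer_instance

-- Steps are indexed from `0`: `w n` is the step from `S_n` to `S_{n+1}`.
def recordStepCount (w : ℕ → ℤ) (N : ℕ) : ℕ := #{n ∈ range N | IsWeakRecord w n ∧ w n = 1}

theorem recordStepCount_succ (w : ℕ → ℤ) (N : ℕ) :
    recordStepCount w (N + 1) =
      recordStepCount w N + if IsWeakRecord w N ∧ w N = 1 then 1 else 0 := by
  simp only [recordStepCount, card_filter, sum_range_succ]

theorem sup'_partialSum_eq_recordStepCount (w : ℕ → ℤ) (hw : ∀ i, w i ≤ 1) (N : ℕ) :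
    (range (N + 1)).sup' nonempty_range_add_one (fun k => ∑ i ∈ range k, w i) =
      recordStepCount w N := by
  induction N with
  | zero => simp [recordStepCount]
  | succ N ih =>
    set s := fun k => ∑ i ∈ range k, w i
    set M := (range (N + 1)).sup' nonempty_range_add_one s
    have hsN : s N ≤ M := le_sup' s (self_mem_range_succ N)
    have hstep : s (N + 1) = s N + w N := sum_range_succ w N
    have hsplit : (range (N + 1 + 1)).sup' nonempty_range_add_one s = s (N + 1) ⊔ M := by
      rw [sup'_congr _ range_add_one fun _ _ => rfl, sup'_insert]
    rw [hsplit, recordStepCount_succ, Nat.cast_add, ← ih]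
    by_cases hup : IsWeakRecord w N ∧ w N = 1
    · have hM : M = s N :=
        le_antisymm (sup'_le _ _ fun k hk => hup.1 k (mem_range_succ_iff.1 hk)) hsN
      rw [if_pos hup]
      omega
    · suffices s (N + 1) ≤ M by rw [if_neg hup]; omega
      have hwN := hw N
      by_cases hrec : IsWeakRecord w N
      · have : w N ≠ 1 := fun h => hup ⟨hrec, h⟩
        omega
      · obtain ⟨k, hkN, hk⟩ : ∃ k ≤ N, s N < s k := by simpa [IsWeakRecord] using hrec
        have : s k ≤ M := le_sup' s (mem_range_succ_iff.2 hkN)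
        omega

theorem tendsto_sup'_div_of_tendsto_div {u : ℕ → ℝ} {m : ℝ} (hm : 0 ≤ m)
    (hu : Tendsto (fun n => u n / n) atTop (𝓝 m)) :
    Tendsto (fun N => (range (N + 1)).sup' nonempty_range_add_one u / N) atTop (𝓝 m) := by
  refine tendsto_order.2 ⟨fun a ha => ?_, fun b hb => ?_⟩
  · filter_upwards [(tendsto_order.1 hu).1 a ha] with N hN
    exact hN.trans_le <|
      div_le_div_of_nonneg_right (le_sup' u (self_mem_range_succ N)) N.cast_nonneg
  · obtain ⟨c, hmc, hcb⟩ := exists_between hb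
    obtain ⟨K, hK⟩ := eventually_atTop.1 ((tendsto_order.1 hu).2 c hmc)
    set C := (range (K + 1)).sup' nonempty_range_add_one u
    filter_upwards [(tendsto_order.1 (tendsto_const_div_atTop_nhds_zero_nat C)).2 b
      (hm.trans_lt hb), eventually_ge_atTop (K + 1)] with N hCN hKN
    have hN : (0 : ℝ) < N := by exact_mod_cast K.succ_pos.trans_le hKN
    rw [div_lt_iff₀ hN]
    refine (sup'_lt_iff _).2 fun k hkN => ?_
    rcases le_or_gt k K with hkK | hKk
    · exact (le_sup' u (mem_range_succ_iff.2 hkK)).trans_lt ((div_lt_iff₀ hN).1 hCN)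
    · have hk : (0 : ℝ) < k := by exact_mod_cast K.zero_le.trans_lt hKk
      calc u k < c * k := (div_lt_iff₀ hk).1 (hK k hKk.le)
        _ ≤ c * N :=
          mul_le_mul_of_nonneg_left (by exact_mod_cast mem_range_succ_iff.1 hkN) (by linarith)
        _ < b * N := by gcongr

def revPerm (n : ℕ) : Equiv.Perm ℕ :=
  Function.Involutive.toPerm (fun i => if i < n then n - 1 - i else i) <| by
    intro i
    by_cases hi : i < n
    · simp only [hi, if_true]; rw [if_pos (by omega)]; omega
    · simp [hi]

theorem revPerm_apply_of_lt {n i : ℕ} (hi : i < n) : revPerm n i = n - 1 - i := if_pos hi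

theorem sum_range_revPerm {M : Type*} [AddCommGroup M] (w : ℕ → M) {n j : ℕ} (hj : j ≤ n) :
    ∑ i ∈ range j, w (revPerm n i) = ∑ i ∈ range n, w i - ∑ i ∈ range (n - j), w i := by
  induction j with
  | zero => simp
  | succ j ih =>
    rw [sum_range_succ, ih (by omega), show n - j = n - (j + 1) + 1 by omega, sum_range_succ,
      revPerm_apply_of_lt (by omega), show n - 1 - j = n - (j + 1) by omega]
    abel

theorem isWeakRecord_iff_revPerm_partialSums_nonneg (w : ℕ → ℤ) (n : ℕ) :
    IsWeakRecord w n ↔ ∀ j ≤ n, 0 ≤ ∑ i ∈ range j, w (revPerm n i) := by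
  constructor
  · intro h j hj
    rw [sum_range_revPerm w hj, sub_nonneg]
    exact h _ (Nat.sub_le n j)
  · intro h k hk
    have := h (n - k) (Nat.sub_le n k)
    rwa [sum_range_revPerm w (Nat.sub_le n k), Nat.sub_sub_self hk, sub_nonneg] at this

theorem recordStepCount_eq_sum_indicator {Ω : Type*} (W : ℕ → Ω → ℤ) (N : ℕ) (ω : Ω) :
    (recordStepCount (W · ω) N : ℝ) =
      ∑ n ∈ range N, ({ω | IsWeakRecord (W · ω) n} ∩ W n ⁻¹' {1}).indicator 1 ω := by
  rw [recordStepCount, card_filter, Nat.cast_sum]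
  refine sum_congr rfl fun n _ => ?_
  by_cases h : IsWeakRecord (W · ω) n ∧ W n ω = 1 <;> simp [h]

theorem measurableSet_isWeakRecord {Ω : Type*} {m : MeasurableSpace Ω} {W : ℕ → Ω → ℤ} {n : ℕ}
    (hW : ∀ i < n, Measurable (W i)) : MeasurableSet {ω | IsWeakRecord (W · ω) n} := by
  have hS : ∀ k ≤ n, Measurable fun ω => ∑ i ∈ range k, W i ω := fun k hk =>
    Finset.measurable_sum _ fun i hi => hW i ((mem_range.1 hi).trans_le hk)
  simp only [IsWeakRecord, Set.ofPred_forall]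
  exact .iInter fun k => .iInter fun hk => measurableSet_le (hS k hk) (hS n le_rfl)

section IID

variable {Ω : Type*} [MeasurableSpace Ω] {P : Measure Ω} {W : ℕ → Ω → ℤ}

theorem map_perm_eq_map_of_iIndepFun (hmeas : ∀ i, Measurable (W i)) (hindep : iIndepFun W P)
    (hident : ∀ i, P.map (W i) = P.map (W 0)) (σ : Equiv.Perm ℕ) :
    P.map (fun ω i => W (σ i) ω) = P.map (fun ω i => W i ω) := by
  rw [(hindep.precomp σ.injective).map_fun_eq_infinitePi_map fun i => hmeas _,
    hindep.map_fun_eq_infinitePi_map hmeas]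
  simp only [hident]

theorem measure_isWeakRecord_eq_measure_nonneg (hmeas : ∀ i, Measurable (W i))
    (hindep : iIndepFun W P) (hident : ∀ i, P.map (W i) = P.map (W 0)) (n : ℕ) :
    P {ω | IsWeakRecord (W · ω) n} = P {ω | ∀ k ≤ n, 0 ≤ ∑ i ∈ range k, W i ω} := by
  set B : Set (ℕ → ℤ) := {x | ∀ k ≤ n, 0 ≤ ∑ i ∈ range k, x i}
  have hB : MeasurableSet B := by
    simp only [B, Set.ofPred_forall]
    exact .iInter fun k => .iInter fun _ =>
      measurableSet_le measurable_const (Finset.measurable_sum _ fun i _ => measurable_pi_apply i)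
  calc P {ω | IsWeakRecord (W · ω) n}
      = P ((fun ω i => W (revPerm n i) ω) ⁻¹' B) :=
        congrArg P (Set.ext fun ω => isWeakRecord_iff_revPerm_partialSums_nonneg _ n)
    _ = P.map (fun ω i => W (revPerm n i) ω) B :=
        (Measure.map_apply (measurable_pi_lambda _ fun i => hmeas _) hB).symm
    _ = P.map (fun ω i => W i ω) B := by
        rw [map_perm_eq_map_of_iIndepFun hmeas hindep hident]
    _ = P {ω | ∀ k ≤ n, 0 ≤ ∑ i ∈ range k, W i ω} :=
        Measure.map_apply (measurable_pi_lambda _ hmeas) hB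

theorem measure_isWeakRecord_inter (hmeas : ∀ i, Measurable (W i)) (hindep : iIndepFun W P)
    (n : ℕ) (s : Set ℤ) :
    P ({ω | IsWeakRecord (W · ω) n} ∩ W n ⁻¹' s) =
      P {ω | IsWeakRecord (W · ω) n} * P (W n ⁻¹' s) := by
  let mW : ℕ → MeasurableSpace Ω := fun i => MeasurableSpace.comap (W i) inferInstance
  have hind := indep_iSup_of_disjoint (fun i => (hmeas i).comap_le)
    ((iIndepFun_iff_iIndep _ _ _).1 hindep) (S := Set.Iio n) (T := {n}) (by simp)
  refine (Indep_iff _ _ _).1 hind _ _ (measurableSet_isWeakRecord fun i hi => ?_) ?_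
  · exact (comap_measurable (W i)).mono (le_iSup₂ (f := fun j _ => mW j) i hi) le_rfl
  · exact le_iSup₂ (f := fun j (_ : j ∈ ({n} : Set ℕ)) => mW j) n rfl _ ⟨s, .of_discrete, rfl⟩

theorem measurableSet_recordStep (hmeas : ∀ i, Measurable (W i)) (n : ℕ) :
    MeasurableSet ({ω | IsWeakRecord (W · ω) n} ∩ W n ⁻¹' {1}) :=
  (measurableSet_isWeakRecord fun i _ => hmeas i).inter (hmeas n .of_discrete)

theorem integral_recordStepCount [IsProbabilityMeasure P] (hmeas : ∀ i, Measurable (W i))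
    (hindep : iIndepFun W P) (hident : ∀ i, P.map (W i) = P.map (W 0)) (N : ℕ) :
    ∫ ω, (recordStepCount (W · ω) N : ℝ) ∂P =
      P.real {ω | W 0 ω = 1} * ∑ n ∈ range N, P.real {ω | ∀ k ≤ n, 0 ≤ ∑ i ∈ range k, W i ω} := by
  have hup : ∀ n, P (W n ⁻¹' {1}) = P {ω | W 0 ω = 1} := fun n => by
    rw [← Measure.map_apply (hmeas n) .of_discrete, hident,
      Measure.map_apply (hmeas 0) .of_discrete]
    rfl
  simp_rw [recordStepCount_eq_sum_indicator]
  rw [integral_finsetSum _ fun n _ => (integrable_const 1).indicator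
    (measurableSet_recordStep hmeas n), mul_sum]
  refine sum_congr rfl fun n _ => ?_
  rw [integral_indicator_one (measurableSet_recordStep hmeas n), measureReal_def,
    measure_isWeakRecord_inter hmeas hindep, measure_isWeakRecord_eq_measure_nonneg hmeas hindep
    hident, hup, ENNReal.toReal_mul, mul_comm, measureReal_def, measureReal_def]

theorem ae_tendsto_recordStepCount_div (hmeas : ∀ i, Measurable (W i)) (hindep : iIndepFun W P)
    (hident : ∀ i, P.map (W i) = P.map (W 0)) (hle : ∀ i, ∀ᵐ ω ∂P, W i ω ≤ 1)
    (hint : Integrable (fun ω => (W 0 ω : ℝ)) P) (hm0 : 0 ≤ ∫ ω, (W 0 ω : ℝ) ∂P) :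
    ∀ᵐ ω ∂P, Tendsto (fun N => (recordStepCount (W · ω) N : ℝ) / N) atTop
      (𝓝 (∫ ω, (W 0 ω : ℝ) ∂P)) := by
  have hcast : Measurable (fun z : ℤ => (z : ℝ)) := measurable_of_countable _
  have hlln := strong_law_ae_real (fun i ω => (W i ω : ℝ)) hint
    (fun i j hij => (hindep.indepFun hij).comp hcast hcast)
    (fun i => IdentDistrib.comp ⟨(hmeas i).aemeasurable, (hmeas 0).aemeasurable, hident i⟩ hcast)
  filter_upwards [ae_all_iff.2 hle, hlln] with ω hω hlln
  refine (tendsto_sup'_div_of_tendsto_div hm0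
    (u := fun k => ((∑ i ∈ range k, W i ω : ℤ) : ℝ)) (by simpa using hlln)).congr fun N => ?_
  rw [← Int.cast_natCast (recordStepCount _ N), ← sup'_partialSum_eq_recordStepCount _ hω,
    apply_sup'_eq_sup'_comp _ _ fun _ _ => Int.cast_max]
  rfl

theorem tendsto_integral_recordStepCount_div [IsProbabilityMeasure P]
    (hmeas : ∀ i, Measurable (W i)) (hindep : iIndepFun W P)
    (hident : ∀ i, P.map (W i) = P.map (W 0)) (hle : ∀ i, ∀ᵐ ω ∂P, W i ω ≤ 1)
    (hint : Integrable (fun ω => (W 0 ω : ℝ)) P) (hm0 : 0 ≤ ∫ ω, (W 0 ω : ℝ) ∂P) :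
    Tendsto (fun N => ∫ ω, (recordStepCount (W · ω) N : ℝ) / N ∂P) atTop
      (𝓝 (∫ ω, (W 0 ω : ℝ) ∂P)) := by
  have hcount : ∀ N, Measurable fun ω => (recordStepCount (W · ω) N : ℝ) := fun N => by
    simp_rw [recordStepCount_eq_sum_indicator]
    exact Finset.measurable_sum _ fun n _ =>
      measurable_one.indicator (measurableSet_recordStep hmeas n)
  have hbound : ∀ N, ∀ᵐ ω ∂P, ‖(recordStepCount (W · ω) N : ℝ) / N‖ ≤ 1 := fun N =>
    .of_forall fun ω => by
      rw [Real.norm_of_nonneg (by positivity)]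
      refine div_le_one_of_le₀ ?_ N.cast_nonneg
      exact_mod_cast (card_filter_le _ _).trans (card_range N).le
  simpa using tendsto_integral_of_dominated_convergence (fun _ => 1)
    (fun N => ((hcount N).div_const _).aestronglyMeasurable) (integrable_const 1) hbound
    (ae_tendsto_recordStepCount_div hmeas hindep hident hle hint hm0)

theorem tendsto_measureReal_partialSums_nonneg [IsFiniteMeasure P]
    (hmeas : ∀ i, Measurable (W i)) :
    Tendsto (fun n => P.real {ω | ∀ k ≤ n, 0 ≤ ∑ i ∈ range k, W i ω}) atTop
      (𝓝 (P.real {ω | ∀ n : ℕ, 1 ≤ n → 0 ≤ ∑ i ∈ range n, W i ω})) := by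
  set A : ℕ → Set Ω := fun n => {ω | ∀ k ≤ n, 0 ≤ ∑ i ∈ range k, W i ω}
  have hA : {ω | ∀ n : ℕ, 1 ≤ n → 0 ≤ ∑ i ∈ range n, W i ω} = ⋂ n, A n := by
    ext ω
    simp only [A, Set.mem_ofPred_eq, Set.mem_iInter]
    refine ⟨fun h n k _ => ?_, fun h n _ => h n n le_rfl⟩
    rcases Nat.eq_zero_or_pos k with rfl | hk
    · simp
    · exact h k hk
  have hAmeas : ∀ n, MeasurableSet (A n) := fun n => by
    simp only [A, Set.ofPred_forall]
    exact .iInter fun k => .iInter fun _ =>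
      measurableSet_le measurable_const (Finset.measurable_sum _ fun i _ => hmeas i)
  rw [hA]
  exact (ENNReal.tendsto_toReal (measure_ne_top P _)).comp <| tendsto_measure_iInter_atTop
    (fun n => (hAmeas n).nullMeasurableSet) (fun n n' hn ω hω k hk => hω k (hk.trans hn))
    ⟨0, measure_ne_top P _⟩

end IID

/-- For i.i.d. integer-valued W₁, W₂, ... with W₁ ≤ 1 a.s., mean
m = E[W₁] ≥ 0 and q = P(W₁ = 1) > 0, the probability that all partial sums
Sₙ = W₁ + ... + Wₙ are nonnegative equals m/q. -/
theorem skip_free_walk_stays_nonneg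
    {Ω : Type*} [MeasurableSpace Ω] (P : Measure Ω) [IsProbabilityMeasure P]
    (W : ℕ → Ω → ℤ) (hmeas : ∀ i, Measurable (W i))
    (hindep : iIndepFun W P)
    (hident : ∀ i, Measure.map (W i) P = Measure.map (W 0) P)
    (hle : ∀ i, ∀ᵐ ω ∂P, W i ω ≤ 1)
    (hint : Integrable (fun ω => (W 0 ω : ℝ)) P)
    (m : ℝ) (hm : m = ∫ ω, (W 0 ω : ℝ) ∂P) (hm0 : 0 ≤ m)
    (q : ℝ) (hq : q = (P {ω | W 0 ω = 1}).toReal) (hq0 : 0 < q) :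
    P {ω | ∀ n : ℕ, 1 ≤ n → 0 ≤ ∑ i ∈ Finset.range n, W i ω} = ENNReal.ofReal (m / q) := by
  have hmean : ∀ N : ℕ, ∫ ω, (recordStepCount (W · ω) N : ℝ) / N ∂P =
      q * ((N : ℝ)⁻¹ * ∑ n ∈ range N, P.real {ω | ∀ k ≤ n, 0 ≤ ∑ i ∈ range k, W i ω}) :=
    fun N => by
      rw [integral_div, integral_recordStepCount hmeas hindep hident, hq, measureReal_def]
      ring
  have hmq : m = q * P.real {ω | ∀ n : ℕ, 1 ≤ n → 0 ≤ ∑ i ∈ Finset.range n, W i ω} := by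
    refine tendsto_nhds_unique ?_
      ((tendsto_measureReal_partialSums_nonneg hmeas).cesaro.const_mul q)
    simpa only [hmean, ← hm] using
      tendsto_integral_recordStepCount_div hmeas hindep hident hle hint (hm ▸ hm0)
  rw [← ofReal_measureReal, hmq, mul_div_cancel_left₀ _ hq0.ne']
end
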